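/- There is a CNN architecture with depth L = 2, at most J = 16 channels, filter size K = 2, and all parameters bounded in magnitude by 3N, such that for every positive integer N and every integer m ∈ {0,1,…,N}, this architecture yields a CNN ψ̃_{m,N} ∈ F^CNN(2, 16, 2, 3N, 3N) satisfying ψ̃_{m,N}(x) = ψ(3N(x − m/N)) exactly for all x, and ‖ψ̃_{m,N}‖_{W^{k,∞}((0,1))} ≤ (3N)^k for k = 0, 1. Furthermore, the weight matrix in the fully connected layer of ψ̃_{m,N} has nonzero entries only in its first row. -/

import Mathlib

open MeasureTheory ENNReal

namespace CRN

noncomputable section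

/-- ReLU activation. -/
def relu (x : ℝ) : ℝ := max x 0

/-- One-sided stride-one convolution of a filter `W` with `Z ∈ ℝ^{D×Cin}`. -/
def conv1d {D K Cin Cout : ℕ} (W : Fin Cout → Fin K → Fin Cin → ℝ)
    (Z : Fin D → Fin Cin → ℝ) : Fin D → Fin Cout → ℝ :=
  fun i j => ∑ k : Fin K, ∑ l : Fin Cin,
    if h : (i : ℕ) + (k : ℕ) < D then W j k l * Z ⟨(i : ℕ) + (k : ℕ), h⟩ l else 0

/-- A convolutional layer: a filter together with a bias matrix. -/
structure ConvLayer (D K Cin Cout : ℕ) where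
  W : Fin Cout → Fin K → Fin Cin → ℝ
  B : Fin D → Fin Cout → ℝ

def ConvLayer.eval {D K Cin Cout : ℕ} (layer : ConvLayer D K Cin Cout)
    (Z : Fin D → Fin Cin → ℝ) : Fin D → Fin Cout → ℝ :=
  fun i j => relu (conv1d layer.W Z i j + layer.B i j)

def ConvLayer.bounded {D K Cin Cout : ℕ} (layer : ConvLayer D K Cin Cout) (κ : ℝ) : Prop :=
  (∀ j k l, |layer.W j k l| ≤ κ) ∧ (∀ i j, |layer.B i j| ≤ κ)

/-- A chain of convolutional layers (each followed by ReLU). -/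
inductive ConvChain (D K : ℕ) : ℕ → ℕ → Type
  | single {Cin Cout : ℕ} (layer : ConvLayer D K Cin Cout) : ConvChain D K Cin Cout
  | cons {Cin Cmid Cout : ℕ} (layer : ConvLayer D K Cin Cmid)
      (rest : ConvChain D K Cmid Cout) : ConvChain D K Cin Cout

def ConvChain.eval {D K : ℕ} : {Cin Cout : ℕ} → ConvChain D K Cin Cout →
    (Fin D → Fin Cin → ℝ) → (Fin D → Fin Cout → ℝ)
  | _, _, .single layer => layer.eval
  | _, _, .cons layer rest => fun Z => rest.eval (layer.eval Z)

/-- number of convolutional layers (filters) in a chain -/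
def ConvChain.depth {D K : ℕ} : {Cin Cout : ℕ} → ConvChain D K Cin Cout → ℕ
  | _, _, .single _ => 1
  | _, _, .cons _ rest => rest.depth + 1

/-- all channel sizes in the chain are bounded by `J` -/
def ConvChain.channelsLe {D K : ℕ} : {Cin Cout : ℕ} → ConvChain D K Cin Cout → ℕ → Prop
  | Cin, Cout, .single _, J => Cin ≤ J ∧ Cout ≤ J
  | Cin, _, @ConvChain.cons _ _ _ Cmid _ _ rest, J => Cin ≤ J ∧ Cmid ≤ J ∧ rest.channelsLe J

/-- all filter and bias entries are bounded in magnitude by `κ` -/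
def ConvChain.bounded {D K : ℕ} : {Cin Cout : ℕ} → ConvChain D K Cin Cout → ℝ → Prop
  | _, _, .single layer, κ => layer.bounded κ
  | _, _, .cons layer rest, κ => layer.bounded κ ∧ rest.bounded κ

/-- the padding operator `P(x) = [x, 0, …, 0] ∈ ℝ^{D×C}` -/
def pad {D : ℕ} (C : ℕ) (x : Fin D → ℝ) : Fin D → Fin C → ℝ :=
  fun i j => if (j : ℕ) = 0 then x i else 0

/-- composition of `M` residual blocks, each `Z ↦ Conv(Z) + Z` -/
def resEval {D K C M : ℕ} (blocks : Fin M → ConvChain D K C C)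
    (Z : Fin D → Fin C → ℝ) : Fin D → Fin C → ℝ :=
  (List.finRange M).foldl (fun Z m => fun i j => (blocks m).eval Z i j + Z i j) Z

/-- The class `𝒞(M, L, J, K, κ₁, κ₂)` of ConvResNets: padding, `M` residual blocks with at most
`L` filters per block, at most `J` channels, filter size `K`, filter/bias entries bounded by `κ₁`;
and a final fully connected layer `f(x) = W ⊗ Q(x) + b` with `‖W‖_∞ ∨ |b| ≤ κ₂`. -/
def ConvResNetClass (D M L J K : ℕ) (κ₁ κ₂ : ℝ) : Set ((Fin D → ℝ) → ℝ) :=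
  { f | ∃ (C : ℕ) (blocks : Fin M → ConvChain D K C C)
        (Wout : Fin D → Fin C → ℝ) (b : ℝ),
      0 < C ∧ C ≤ J ∧
      (∀ m, (blocks m).depth ≤ L) ∧
      (∀ m, (blocks m).channelsLe J) ∧
      (∀ m, (blocks m).bounded κ₁) ∧
      (∀ i j, |Wout i j| ≤ κ₂) ∧ |b| ≤ κ₂ ∧
      (∀ x, f x = (∑ i, ∑ j, Wout i j * resEval blocks (pad C x) i j) + b) }

/-- A CNN: padding, a chain of convolutional layers, then a fully connected output layer. -/
structure CNN (D K : ℕ) where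
  Cin : ℕ
  Cout : ℕ
  chain : ConvChain D K Cin Cout
  Wout : Fin D → Fin Cout → ℝ
  bias : ℝ

def CNN.eval {D K : ℕ} (net : CNN D K) (x : Fin D → ℝ) : ℝ :=
  (∑ i, ∑ j, net.Wout i j * net.chain.eval (pad net.Cin x) i j) + net.bias

/-- membership of a CNN in the architecture class `ℱ^CNN(L, J, K, κ₁, κ₂)` -/
def CNN.inClass {D K : ℕ} (net : CNN D K) (L J : ℕ) (κ₁ κ₂ : ℝ) : Prop :=
  0 < net.Cin ∧ net.Cin ≤ J ∧ net.Cout ≤ J ∧ net.chain.depth ≤ L ∧ net.chain.channelsLe J ∧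
  net.chain.bounded κ₁ ∧ (∀ i j, |net.Wout i j| ≤ κ₂) ∧ |net.bias| ≤ κ₂

/-- the weight matrix of the fully connected layer has nonzero entries only in its first row -/
def CNN.firstRowOnly {D K : ℕ} (net : CNN D K) : Prop :=
  ∀ i j, net.Wout i j ≠ 0 → (i : ℕ) = 0

/-! ### Sobolev spaces -/

/-- first-order partial derivative in direction `i` -/
def pderiv {D : ℕ} (i : Fin D) (φ : (Fin D → ℝ) → ℝ) : (Fin D → ℝ) → ℝ :=
  fun x => fderiv ℝ φ x (Pi.single i 1)

/-- iterated partial derivatives along a list of directions -/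
def iterPDeriv {D : ℕ} : List (Fin D) → ((Fin D → ℝ) → ℝ) → ((Fin D → ℝ) → ℝ)
  | [], φ => φ
  | i :: l, φ => pderiv i (iterPDeriv l φ)

/-- `g` is the weak derivative of `f` on `Ω` of multi-order given by the list `l`:
integration by parts against all smooth compactly supported test functions in `Ω`. -/
def HasWeakDerivOn {D : ℕ} (Ω : Set (Fin D → ℝ)) (f g : (Fin D → ℝ) → ℝ)
    (l : List (Fin D)) : Prop :=
  ∀ φ : (Fin D → ℝ) → ℝ, ContDiff ℝ (⊤ : ℕ∞) φ → HasCompactSupport φ → tsupport φ ⊆ Ω →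
    ∫ x in Ω, f x * iterPDeriv l φ x = (-1 : ℝ) ^ l.length * ∫ x in Ω, g x * φ x

/-- the finite set of multi-indices `a : Fin D → ℕ` with `|a| ≤ α` -/
def multiIdx (D α : ℕ) : Finset (Fin D → ℕ) :=
  (Fintype.piFinset fun _ : Fin D => Finset.range (α + 1)).filter fun a => ∑ i, a i ≤ α

/-- a list of directions representing the multi-index `a` -/
def idxList {D : ℕ} (a : Fin D → ℕ) : List (Fin D) :=
  (List.finRange D).flatMap fun i => List.replicate (a i) i

/-- the Sobolev `W^{α,p}(Ω)`-norm of a family `g` of (weak) derivatives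
(`g a` is the derivative of multi-order `a`; `g 0` is the function itself) -/
def sobNormOf {D : ℕ} (Ω : Set (Fin D → ℝ)) (α : ℕ) (p : ℝ≥0∞)
    (g : (Fin D → ℕ) → (Fin D → ℝ) → ℝ) : ℝ≥0∞ :=
  if p = ∞ then (multiIdx D α).sup fun a => eLpNorm (g a) ∞ (volume.restrict Ω)
  else (∑ a ∈ multiIdx D α, eLpNorm (g a) p (volume.restrict Ω) ^ p.toReal) ^ (1 / p.toReal)

/-- `f ∈ W^{α,p}(Ω)` with `‖f‖_{W^{α,p}(Ω)} ≤ R` -/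
def SobolevLe {D : ℕ} (Ω : Set (Fin D → ℝ)) (α : ℕ) (p : ℝ≥0∞)
    (f : (Fin D → ℝ) → ℝ) (R : ℝ≥0∞) : Prop :=
  ∃ g : (Fin D → ℕ) → (Fin D → ℝ) → ℝ,
    (∀ x, g 0 x = f x) ∧
    (∀ a ∈ multiIdx D α, HasWeakDerivOn Ω f (g a) (idxList a)) ∧
    sobNormOf Ω α p g ≤ R

/-- the Euclidean distance on `Fin D → ℝ` -/
def eudist {D : ℕ} (x y : Fin D → ℝ) : ℝ := Real.sqrt (∑ i, (x i - y i) ^ 2)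

/-- the Sobolev–Slobodeckij `W^{s,p}(Ω)`-norm, `0 < s < 1` -/
def slobNorm {D : ℕ} (Ω : Set (Fin D → ℝ)) (s : ℝ) (p : ℝ≥0∞)
    (f : (Fin D → ℝ) → ℝ) : ℝ≥0∞ :=
  if p = ∞ then
    max (eLpNorm f ∞ (volume.restrict Ω))
      (essSup (fun z : (Fin D → ℝ) × (Fin D → ℝ) =>
          ENNReal.ofReal (|f z.1 - f z.2| / eudist z.1 z.2 ^ s))
        ((volume.restrict Ω).prod (volume.restrict Ω)))
  else
    (eLpNorm f p (volume.restrict Ω) ^ p.toReal +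
      ∫⁻ x in Ω, ∫⁻ y in Ω,
        ENNReal.ofReal ((|f x - f y| / eudist x y ^ (s + (D : ℝ) / p.toReal)) ^ p.toReal)) ^
      (1 / p.toReal)

/-- `‖f‖_{W^{s,p}(Ω)} ≤ R` for `s ∈ [0,1]`: integer Sobolev norm at the endpoints,
Sobolev–Slobodeckij norm for `0 < s < 1`. -/
def FracSobolevLe {D : ℕ} (Ω : Set (Fin D → ℝ)) (s : ℝ) (p : ℝ≥0∞)
    (f : (Fin D → ℝ) → ℝ) (R : ℝ≥0∞) : Prop :=
  (s = 0 → SobolevLe Ω 0 p f R) ∧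
  (s = 1 → SobolevLe Ω 1 p f R) ∧
  (s ≠ 0 → s ≠ 1 → slobNorm Ω s p f ≤ R)

/-- the open unit hypercube `(0,1)^D` -/
def cube (D : ℕ) : Set (Fin D → ℝ) := {x | ∀ i, x i ∈ Set.Ioo (0 : ℝ) 1}

end

end CRN

namespace CRN

/-- the trapezoid function `ψ`: `ψ(x) = 1` for `|x| < 1`, `2 - |x|` for `1 ≤ |x| ≤ 2`,
`0` for `|x| > 2`. -/
noncomputable def trap (x : ℝ) : ℝ :=
  if |x| ≤ 1 then 1 else if |x| ≤ 2 then 2 - |x| else 0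

end CRN

open CRN MeasureTheory ENNReal

/-!
The trapezoid is a combination of four hinges,
`ψ(y) = relu (y + 2) - relu (y + 1) - relu (y - 1) + relu (y - 2)`. With `s = 3N x - 3m`, a first
layer outputs `relu s` and `relu (-s)`, a second layer forms `relu (s + c)` for the four offsets
`c ∈ {2, 1, -1, -2}`, and the output layer takes the combination with weights `±1`; all parameters
are at most `max 2 (3N)` in size. The network is therefore `ψ(3N x - 3m)`, which is bounded by `1`.
Being continuous and piecewise linear, it has its right derivative, `3N` times a step function
with values in `{-1, 0, 1}`, as weak derivative on `(0,1)`: this is integration by parts for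
functions with a right derivative.
-/

namespace CRN

open Set

lemma relu_sub_relu_neg (t : ℝ) : relu t - relu (-t) = t :=
  max_zero_sub_eq_self t

noncomputable def heaviside (y : ℝ) : ℝ := if 0 ≤ y then 1 else 0

lemma heaviside_mono : Monotone heaviside := fun y z h => by
  unfold heaviside; split_ifs <;> linarith

lemma heaviside_nonneg (y : ℝ) : 0 ≤ heaviside y := by
  unfold heaviside; split_ifs <;> norm_num

lemma heaviside_le_one (y : ℝ) : heaviside y ≤ 1 := by
  unfold heaviside; split_ifs <;> norm_num

lemma hasDerivWithinAt_relu_Ioi (y : ℝ) : HasDerivWithinAt relu (heaviside y) (Ioi y) y := by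
  unfold heaviside
  split_ifs with hy
  · refine (hasDerivWithinAt_id y _).congr (fun t ht => ?_) (max_eq_left hy)
    exact max_eq_left (hy.trans ht.le)
  · push Not at hy
    refine (hasDerivWithinAt_const y _ 0).congr_of_eventuallyEq ?_ (max_eq_right hy.le)
    filter_upwards [eventually_nhdsWithin_of_eventually_nhds (eventually_lt_nhds hy)] with t ht
    exact max_eq_right ht.le

lemma hasDerivWithinAt_relu_affine_Ioi {a : ℝ} (ha : 0 < a) (b t : ℝ) :
    HasDerivWithinAt (fun s => relu (a * s + b)) (a * heaviside (a * t + b)) (Ioi t) t := by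
  have hinner : HasDerivWithinAt (fun s => a * s + b) a (Ioi t) t := by
    simpa using ((hasDerivAt_id t).const_mul a).add_const b |>.hasDerivWithinAt
  have hmaps : MapsTo (fun s => a * s + b) (Ioi t) (Ioi (a * t + b)) := fun s hs => by
    simp only [mem_Ioi] at hs ⊢; nlinarith
  rw [mul_comm]
  exact (hasDerivWithinAt_relu_Ioi _).comp t hinner hmaps

def hingeWeight : Fin 4 → ℝ := ![1, -1, -1, 1]

def hingeOffset : Fin 4 → ℝ := ![2, 1, -1, -2]

lemma trap_eq_sum_relu (y : ℝ) :
    trap y = ∑ j, hingeWeight j * relu (y + hingeOffset j) := by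
  simp only [Fin.sum_univ_four, hingeWeight, hingeOffset, trap, relu, Matrix.cons_val]
  norm_num
  rcases abs_cases y with ⟨h, _⟩ | ⟨h, _⟩ <;> rw [h] <;> split_ifs <;>
    simp only [max_def] <;> split_ifs <;> linarith

lemma trap_continuous : Continuous trap := by
  rw [funext trap_eq_sum_relu]
  have : Continuous relu := continuous_id.max continuous_const
  fun_prop

lemma abs_trap_le_one (y : ℝ) : |trap y| ≤ 1 := by
  rw [abs_le]; unfold trap; split_ifs <;> constructor <;> linarith [abs_nonneg y]

noncomputable def trapRightDeriv (y : ℝ) : ℝ := ∑ j, hingeWeight j * heaviside (y + hingeOffset j)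

lemma abs_trapRightDeriv_le_one (y : ℝ) : |trapRightDeriv y| ≤ 1 := by
  simp only [trapRightDeriv, Fin.sum_univ_four, hingeWeight, hingeOffset, Matrix.cons_val]
  have h₁ := heaviside_mono (show y + 1 ≤ y + 2 by linarith)
  have h₂ := heaviside_mono (show y + -2 ≤ y + -1 by linarith)
  rw [abs_le]; constructor <;>
    linarith [heaviside_le_one (y + 2), heaviside_nonneg (y + 1), heaviside_le_one (y + -1), heaviside_nonneg (y + -2)]

lemma norm_mul_trapRightDeriv_le (a y : ℝ) : ‖a * trapRightDeriv y‖ ≤ |a| := by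
  rw [norm_mul, Real.norm_eq_abs, Real.norm_eq_abs]
  exact mul_le_of_le_one_right (abs_nonneg a) (abs_trapRightDeriv_le_one y)

lemma measurable_trapRightDeriv : Measurable trapRightDeriv := by
  have : Measurable heaviside := Measurable.ite measurableSet_Ici measurable_const measurable_const
  unfold trapRightDeriv
  fun_prop

lemma hasDerivWithinAt_trap_affine_Ioi {a : ℝ} (ha : 0 < a) (b t : ℝ) :
    HasDerivWithinAt (fun s => trap (a * s + b)) (a * trapRightDeriv (a * t + b)) (Ioi t) t := by
  simp only [trap_eq_sum_relu, trapRightDeriv, Finset.mul_sum]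
  refine HasDerivWithinAt.fun_sum fun j _ => ?_
  have := (hasDerivWithinAt_relu_affine_Ioi ha (b + hingeOffset j) t).const_mul (hingeWeight j)
  simp only [add_assoc] at this ⊢
  rwa [mul_left_comm]

lemma setIntegral_Ioo_mul_deriv_eq_neg {a b : ℝ} (hab : a ≤ b) {f g φ : ℝ → ℝ}
    (hf : ContinuousOn f (Icc a b)) (hg : IntervalIntegrable g volume a b)
    (hfg : ∀ t ∈ Ioo a b, HasDerivWithinAt f (g t) (Ioi t) t) (hφ : ContDiff ℝ 1 φ)
    (ha : φ a = 0) (hb : φ b = 0) :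
    ∫ t in Ioo a b, f t * deriv φ t = -∫ t in Ioo a b, g t * φ t := by
  have hφ' : Continuous (deriv φ) := hφ.continuous_deriv le_rfl
  have hibp := intervalIntegral.integral_mul_deriv_eq_deriv_mul_of_hasDeriv_right
    (u := f) (v := φ) (by rwa [uIcc_of_le hab]) hφ.continuous.continuousOn
    (by rwa [min_eq_left hab, max_eq_right hab])
    (fun t _ => ((hφ.differentiable one_ne_zero) t).hasDerivAt.hasDerivWithinAt) hg
    (hφ'.intervalIntegrable a b)
  rw [ha, hb, mul_zero, mul_zero, sub_zero, zero_sub, intervalIntegral.integral_of_le hab,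
    intervalIntegral.integral_of_le hab] at hibp
  rwa [← integral_Ioc_eq_integral_Ioo, ← integral_Ioc_eq_integral_Ioo]

lemma setIntegral_cube_one (f : (Fin 1 → ℝ) → ℝ) :
    ∫ x in cube 1, f x = ∫ t in Ioo 0 1, f (fun _ => t) := by
  have hpre : (MeasurableEquiv.funUnique (Fin 1) ℝ).symm ⁻¹' cube 1 = Ioo 0 1 := by
    ext t; simp [cube, MeasurableEquiv.funUnique]
  have := ((volume_preserving_funUnique (Fin 1) ℝ).symm _).setIntegral_preimage_emb
    (MeasurableEquiv.measurableEmbedding _) f (cube 1)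
  rw [hpre] at this
  exact this.symm

lemma pderiv_fin_one_apply {φ : (Fin 1 → ℝ) → ℝ} (hφ : Differentiable ℝ φ) (t : ℝ) :
    pderiv 0 φ (fun _ => t) = deriv (fun s => φ (fun _ => s)) t := by
  have hline : HasDerivAt (fun s : ℝ => (fun _ : Fin 1 => s)) (fun _ => 1) t :=
    hasDerivAt_pi.2 fun _ => hasDerivAt_id t
  have hcomp := (hφ _).hasFDerivAt.comp_hasDerivAt t hline
  rw [show (fun s => φ fun _ => s) = φ ∘ fun s _ => s from rfl, hcomp.deriv, pderiv]
  congr 1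
  ext i
  simp [Fin.fin_one_eq_zero i]

lemma hasWeakDerivOn_cube_one {f g : ℝ → ℝ} (hf : ContinuousOn f (Icc 0 1))
    (hg : IntervalIntegrable g volume 0 1)
    (hfg : ∀ t ∈ Ioo 0 1, HasDerivWithinAt f (g t) (Ioi t) t) :
    HasWeakDerivOn (cube 1) (fun x => f (x 0)) (fun x => g (x 0)) [0] := by
  intro φ hφ _ hsupp
  have hφ₁ : ContDiff ℝ 1 (fun s => φ fun _ : Fin 1 => s) :=
    (hφ.of_le (by exact_mod_cast le_top)).comp (contDiff_pi.2 fun _ => contDiff_id)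
  have hvanish : ∀ t, t ∉ Ioo (0 : ℝ) 1 → φ (fun _ => t) = 0 := fun t ht =>
    image_eq_zero_of_notMem_tsupport fun h => ht (hsupp h 0)
  simp only [iterPDeriv, List.length_singleton, pow_one, neg_one_mul, setIntegral_cube_one,
    pderiv_fin_one_apply (hφ.differentiable (by simp))]
  exact setIntegral_Ioo_mul_deriv_eq_neg zero_le_one hf hg hfg hφ₁ (hvanish 0 (by simp))
    (hvanish 1 (by simp))

lemma idxList_fin_one (a : Fin 1 → ℕ) : idxList a = List.replicate (a 0) 0 := by
  simp [idxList, List.finRange_succ]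

lemma eq_zero_of_mem_multiIdx_zero {D : ℕ} {a : Fin D → ℕ} (ha : a ∈ multiIdx D 0) : a = 0 := by
  simp only [multiIdx, Finset.mem_filter, nonpos_iff_eq_zero, Finset.sum_eq_zero_iff,
    Finset.mem_univ, true_implies] at ha
  exact funext ha.2

lemma hasWeakDerivOn_nil {D : ℕ} (Ω : Set (Fin D → ℝ)) (f : (Fin D → ℝ) → ℝ) :
    HasWeakDerivOn Ω f f [] := by
  simp [HasWeakDerivOn, iterPDeriv]

lemma eLpNorm_top_le_ofReal {α : Type*} [MeasurableSpace α] {μ : Measure α} {f : α → ℝ} {R : ℝ}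
    (hf : ∀ x, ‖f x‖ ≤ R) : eLpNorm f ∞ μ ≤ ENNReal.ofReal R := by
  rw [eLpNorm_exponent_top]; exact eLpNormEssSup_le_of_ae_bound (ae_of_all _ hf)

lemma sobolevLe_zero_top {D : ℕ} {Ω : Set (Fin D → ℝ)} {f : (Fin D → ℝ) → ℝ} {R : ℝ}
    (hf : ∀ x, ‖f x‖ ≤ R) : SobolevLe Ω 0 ∞ f (ENNReal.ofReal R) := by
  refine ⟨fun _ => f, fun _ => rfl, fun a ha => ?_, ?_⟩
  · rw [eq_zero_of_mem_multiIdx_zero ha]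
    simpa [idxList, List.flatMap] using hasWeakDerivOn_nil Ω f
  · simpa [sobNormOf] using fun _ _ => eLpNorm_top_le_ofReal hf

lemma sobolevLe_one_top {Ω : Set (Fin 1 → ℝ)} {f g : (Fin 1 → ℝ) → ℝ} {R : ℝ}
    (hfg : HasWeakDerivOn Ω f g [0]) (hf : ∀ x, ‖f x‖ ≤ R) (hg : ∀ x, ‖g x‖ ≤ R) :
    SobolevLe Ω 1 ∞ f (ENNReal.ofReal R) := by
  refine ⟨fun a => if a 0 = 0 then f else g, fun _ => rfl, fun a ha => ?_, ?_⟩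
  · have : a 0 ≤ 1 := by simpa [multiIdx] using ha
    rw [idxList_fin_one]
    obtain h | h : a 0 = 0 ∨ a 0 = 1 := by omega
    · simpa [h] using hasWeakDerivOn_nil Ω f
    · simpa [h] using hfg
  · refine (if_pos rfl).trans_le (Finset.sup_le fun a _ => ?_)
    dsimp only
    split_ifs
    exacts [eLpNorm_top_le_ofReal hf, eLpNorm_top_le_ofReal hg]

lemma conv1d_dim_one {K Cin Cout : ℕ} [NeZero K] (W : Fin Cout → Fin K → Fin Cin → ℝ)
    (Z : Fin 1 → Fin Cin → ℝ) (i : Fin 1) (j : Fin Cout) :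
    conv1d W Z i j = ∑ l, W j 0 l * Z i l := by
  obtain rfl := Fin.fin_one_eq_zero i
  unfold conv1d
  rw [Finset.sum_eq_single 0]
  · simp
  · intro k _ hk
    refine Finset.sum_eq_zero fun l _ => dif_neg ?_
    simpa using Fin.val_ne_zero_iff.2 hk
  · simp

/-- Stores `s = a x + b` as the pair `(relu s, relu (-s))`, from which the next layer recovers
`s = relu s - relu (-s)`. -/
def splitLayer (a b : ℝ) : ConvLayer 1 2 1 2 where
  W := fun j _ _ => ![a, -a] j
  B := fun _ j => ![b, -b] j

def hingeLayer : ConvLayer 1 2 2 4 where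
  W := fun _ _ l => ![1, -1] l
  B := fun _ j => hingeOffset j

def trapNet (a b : ℝ) : CNN 1 2 where
  Cin := 1
  Cout := 4
  chain := .cons (splitLayer a b) (.single hingeLayer)
  Wout := fun _ j => hingeWeight j
  bias := 0

lemma splitLayer_eval (a b : ℝ) (x : Fin 1 → ℝ) (j : Fin 2) :
    (splitLayer a b).eval (pad 1 x) 0 j = relu (![1, -1] j * (a * x 0 + b)) := by
  fin_cases j <;> simp [ConvLayer.eval, conv1d_dim_one, splitLayer, pad]; ring_nf

lemma hingeLayer_eval (Z : Fin 1 → Fin 2 → ℝ) (j : Fin 4) :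
    hingeLayer.eval Z 0 j = relu (Z 0 0 - Z 0 1 + hingeOffset j) := by
  simp [ConvLayer.eval, conv1d_dim_one, hingeLayer, sub_eq_add_neg]

lemma trapNet_eval (a b : ℝ) (x : Fin 1 → ℝ) : (trapNet a b).eval x = trap (a * x 0 + b) := by
  simp only [CNN.eval, trapNet, ConvChain.eval, hingeLayer_eval, splitLayer_eval,
    Fin.sum_univ_one, trap_eq_sum_relu, Matrix.cons_val_zero, Matrix.cons_val_one, one_mul,
    neg_one_mul, relu_sub_relu_neg, add_zero]
  rfl

lemma abs_hingeWeight_le_one (j : Fin 4) : |hingeWeight j| ≤ 1 := by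
  fin_cases j <;> norm_num [hingeWeight]

lemma abs_hingeOffset_le_two (j : Fin 4) : |hingeOffset j| ≤ 2 := by
  fin_cases j <;> norm_num [hingeOffset]

lemma trapNet_inClass {J : ℕ} {κ a b : ℝ} (hJ : 4 ≤ J) (hκ : 2 ≤ κ) (ha : |a| ≤ κ)
    (hb : |b| ≤ κ) : (trapNet a b).inClass 2 J κ κ := by
  have hneg : ∀ {c r : ℝ} (j : Fin 2), |c| ≤ r → |![c, -c] j| ≤ r := fun j hc => by
    fin_cases j <;> simpa
  refine ⟨Nat.one_pos, show 1 ≤ J by omega, show 4 ≤ J from hJ, le_rfl,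
    show 1 ≤ J ∧ 2 ≤ J ∧ 2 ≤ J ∧ 4 ≤ J by omega,
    ⟨⟨fun j _ _ => hneg j ha, fun _ j => hneg j hb⟩,
      fun _ _ l => hneg l (by rw [abs_one]; linarith),
      fun _ j => (abs_hingeOffset_le_two j).trans hκ⟩,
    fun _ j => (abs_hingeWeight_le_one j).trans (by linarith),
    show |(0 : ℝ)| ≤ κ by rw [abs_zero]; linarith⟩

lemma trapNet_hasWeakDerivOn_cube {a : ℝ} (ha : 0 < a) (b : ℝ) :
    HasWeakDerivOn (cube 1) (trapNet a b).eval (fun x => a * trapRightDeriv (a * x 0 + b)) [0] := by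
  rw [funext (trapNet_eval a b)]
  refine hasWeakDerivOn_cube_one (f := fun t => trap (a * t + b)) ?_ ?_
    fun t _ => hasDerivWithinAt_trap_affine_Ioi ha b t
  · exact (trap_continuous.comp (by fun_prop)).continuousOn
  · exact intervalIntegrable_const.mono_fun'
      ((measurable_trapRightDeriv.comp (by fun_prop)).const_mul a).aestronglyMeasurable
      (ae_of_all _ fun t => norm_mul_trapRightDeriv_le a _)

end CRN

/-- **Lemma (exact CNN realization of a scaled trapezoid function).**
For every positive integer `N` and every `m ∈ {0,1,…,N}` there is a CNN
`ψ̃_{m,N} ∈ ℱ^CNN(2, 16, 2, 3N, 3N)` with `ψ̃_{m,N}(x) = ψ(3N(x - m/N))` for all `x`,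
`‖ψ̃_{m,N}‖_{W^{k,∞}((0,1))} ≤ (3N)^k` for `k = 0, 1`, and whose fully connected weight
matrix has nonzero entries only in its first row. -/
theorem cnn_realizes_scaled_trapezoid (N : ℕ) (hN : 0 < N) (m : ℕ) (hm : m ≤ N) :
    ∃ net : CNN 1 2,
      net.inClass 2 16 (3 * N) (3 * N) ∧
      net.firstRowOnly ∧
      (∀ x : ℝ, net.eval (fun _ => x) = trap (3 * N * (x - m / N))) ∧
      SobolevLe (cube 1) 0 ∞ net.eval 1 ∧
      SobolevLe (cube 1) 1 ∞ net.eval (ENNReal.ofReal (3 * N)) := by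
  have hscale : (3 : ℝ) ≤ 3 * N := by
    have : (1 : ℝ) ≤ N := by exact_mod_cast hN
    linarith
  have hshift : |-(3 * m : ℝ)| ≤ 3 * N := by
    rw [abs_neg, abs_of_nonneg (by positivity)]
    exact_mod_cast Nat.mul_le_mul_left 3 hm
  have hbound (x : Fin 1 → ℝ) : ‖(trapNet (3 * N) (-(3 * m))).eval x‖ ≤ 1 := by
    rw [trapNet_eval, Real.norm_eq_abs]
    exact abs_trap_le_one _
  refine ⟨trapNet (3 * N) (-(3 * m)),
    trapNet_inClass (by norm_num) (by linarith) (abs_of_nonneg (by linarith)).le hshift,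
    fun i _ _ => Fin.val_eq_zero i, fun x => ?_, ?_, ?_⟩
  · rw [trapNet_eval]
    congr 1
    field_simp
    ring
  · simpa using sobolevLe_zero_top (Ω := cube 1) hbound
  · refine sobolevLe_one_top (trapNet_hasWeakDerivOn_cube (by linarith) _)
      (fun x => (hbound x).trans (by linarith)) fun x => ?_
    exact (norm_mul_trapRightDeriv_le _ _).trans (abs_of_nonneg (by linarith)).le
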